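/- Let S be a Steiner system S(5,8,24) on a 24-element set Ω, let ∞, 0, 1 ∈ Ω be distinct points, and let K₀ ∈ S be an octad with 0 ∈ K₀ and ∞ ∉ K₀, 1 ∉ K₀. Then the number of octads K ∈ S satisfying 0 ∈ K, 1 ∈ K, ∞ ∉ K and |K ∩ K₀| = 2 is exactly 28. -/

import Mathlib

/-
Counting octads through a fixed set by double counting gives the numbers `λᵢ` of octads
containing a given `i`-set. Summing `C(|K ∩ K₀|, 3)` and `C(|K ∩ K₀|, 4)` over the octads
`K ≠ K₀`, which meet `K₀` in at most 4 points, shows that two octads never meet in exactly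
3 points. For the octads `K` through `0` and `1` avoiding `∞`, put `j = |K ∩ (K₀ \ {0})|`;
then `j ∈ {0, 1, 3}`, so `j = [j = 1] + C(j, 2)`, and the sums of `j` and of `C(j, 2)`
over these octads are `7 (λ₃ - λ₄) = 112` and `21 (λ₄ - λ₅) = 84`. Hence exactly
`112 - 84 = 28` of them have `j = 1`, that is `|K ∩ K₀| = 2`.
-/

/-- A Steiner system `S(5,8,24)`: `Ω` has 24 elements, every block (octad) has 8
elements, and every 5-element subset of `Ω` is contained in exactly one octad. -/
def IsSteinerSystem_5_8_24 {Ω : Type*} [Fintype Ω] [DecidableEq Ω]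
    (S : Finset (Finset Ω)) : Prop :=
  Fintype.card Ω = 24 ∧
  (∀ K ∈ S, K.card = 8) ∧
  ∀ A : Finset Ω, A.card = 5 → ∃! K, K ∈ S ∧ A ⊆ K

open Finset

section DoubleCounting

variable {α : Type*} [DecidableEq α]

theorem Finset.sum_choose_card_inter (T : Finset (Finset α)) (B : Finset α) (d : ℕ) :
    ∑ K ∈ T, (#(K ∩ B)).choose d = ∑ D ∈ B.powersetCard d, #{K ∈ T | D ⊆ K} := by
  have hsub (K : Finset α) :
      (B.powersetCard d).bipartiteAbove (fun K D => D ⊆ K) K = (K ∩ B).powersetCard d := by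
    ext D
    simp only [bipartiteAbove, mem_filter, mem_powersetCard, subset_inter_iff]
    tauto
  simp_rw [← card_powersetCard, ← hsub]
  exact sum_card_bipartiteAbove_eq_sum_card_bipartiteBelow _

theorem Finset.card_filter_superset_mul [Fintype α] {S : Finset (Finset α)} {k : ℕ}
    (hk : ∀ K ∈ S, #K = k) (A : Finset α) :
    #{K ∈ S | A ⊆ K} * (k - #A) = ∑ x ∈ Aᶜ, #{K ∈ S | insert x A ⊆ K} := by
  have hdiff : ∀ K ∈ {K ∈ S | A ⊆ K}, #(Aᶜ.bipartiteAbove (fun K x => x ∈ K) K) = k - #A := by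
    intro K hK
    rw [mem_filter] at hK
    rw [bipartiteAbove, filter_mem_eq_inter, inter_comm, ← sdiff_eq_inter_compl,
      card_sdiff_of_subset hK.2, hk K hK.1]
  rw [← sum_const_nat hdiff, sum_card_bipartiteAbove_eq_sum_card_bipartiteBelow]
  refine sum_congr rfl fun x _ => ?_
  rw [bipartiteBelow, filter_filter]
  simp_rw [insert_subset_iff, and_comm]

end DoubleCounting

/-- `octadCount i = C(24 - i, 5 - i) / C(8 - i, 5 - i)` for `i ≤ 5`. -/
def octadCount : ℕ → ℕ
  | 0 => 759
  | 1 => 253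
  | 2 => 77
  | 3 => 21
  | 4 => 5
  | _ => 1

theorem Nat.choose_three_eq_of_le_four {n : ℕ} (hn : n ≤ 4) :
    n.choose 3 = 4 * n.choose 4 + if n = 3 then 1 else 0 := by
  interval_cases n <;> rfl

theorem Nat.eq_ite_add_choose_two {n : ℕ} (hn : n ≤ 3) (hn2 : n ≠ 2) :
    n = (if n = 1 then 1 else 0) + n.choose 2 := by
  interval_cases n <;> trivial

theorem octadCount_mul_eq {i : ℕ} (hi : i ≤ 4) :
    octadCount i * (8 - i) = (24 - i) * octadCount (i + 1) := by
  interval_cases i <;> rfl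

namespace IsSteinerSystem_5_8_24

variable {Ω : Type*} [Fintype Ω] [DecidableEq Ω] {S : Finset (Finset Ω)}

theorem card_octad (hS : IsSteinerSystem_5_8_24 S) {K : Finset Ω} (hK : K ∈ S) : #K = 8 :=
  hS.2.1 K hK

theorem card_filter_superset_of_card_eq_five (hS : IsSteinerSystem_5_8_24 S)
    {A : Finset Ω} (hA : #A = 5) : #{K ∈ S | A ⊆ K} = 1 := by
  obtain ⟨K, hK, huniq⟩ := hS.2.2 A hA
  rw [card_eq_one]
  exact ⟨K, eq_singleton_iff_unique_mem.2
    ⟨mem_filter.2 hK, fun L hL => huniq L (mem_filter.1 hL)⟩⟩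

theorem card_filter_superset (hS : IsSteinerSystem_5_8_24 S) {A : Finset Ω} (hA : #A ≤ 5) :
    #{K ∈ S | A ⊆ K} = octadCount #A := by
  obtain ⟨n, hn⟩ := Nat.exists_eq_add_of_le hA
  induction n generalizing A with
  | zero =>
    rw [card_filter_superset_of_card_eq_five hS (by omega), show #A = 5 by omega]
    rfl
  | succ n ih =>
    have hsucc : ∀ x ∈ Aᶜ, #{K ∈ S | insert x A ⊆ K} = octadCount (#A + 1) := by
      intro x hx
      have hcard : #(insert x A) = #A + 1 := card_insert_of_notMem (by simpa using hx)
      rw [ih (by omega) (by omega), hcard]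
    have hmul := card_filter_superset_mul (fun K => hS.card_octad) A
    rw [sum_const_nat hsucc, card_compl, hS.1, ← octadCount_mul_eq (by omega)] at hmul
    exact Nat.eq_of_mul_eq_mul_right (by omega) hmul

theorem card_filter_superset_not_mem (hS : IsSteinerSystem_5_8_24 S) {A : Finset Ω}
    (hA : #A ≤ 4) {y : Ω} (hy : y ∉ A) :
    #{K ∈ S | A ⊆ K ∧ y ∉ K} = octadCount #A - octadCount (#A + 1) := by
  have hsplit := card_filter_add_card_filter_not (s := {K ∈ S | A ⊆ K}) (fun K => y ∈ K)
  have hmem : {K ∈ {K ∈ S | A ⊆ K} | y ∈ K} = {K ∈ S | insert y A ⊆ K} := by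
    rw [filter_filter]
    simp_rw [insert_subset_iff, and_comm]
  have hcard : #(insert y A) = #A + 1 := card_insert_of_notMem hy
  rw [hmem, filter_filter, hS.card_filter_superset (by omega),
    hS.card_filter_superset (by omega), hcard] at hsplit
  omega

theorem card_inter_le_four (hS : IsSteinerSystem_5_8_24 S) {K L : Finset Ω} (hK : K ∈ S)
    (hL : L ∈ S) (hne : K ≠ L) : #(K ∩ L) ≤ 4 := by
  by_contra! h
  obtain ⟨A, hA, hAcard⟩ := exists_subset_card_eq (show 5 ≤ #(K ∩ L) by omega)
  exact hne ((hS.2.2 A hAcard).unique ⟨hK, hA.trans inter_subset_left⟩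
    ⟨hL, hA.trans inter_subset_right⟩)

theorem sum_choose_card_inter_octad (hS : IsSteinerSystem_5_8_24 S) {K₀ : Finset Ω}
    (hK₀ : K₀ ∈ S) {d : ℕ} (hd : d ≤ 4) :
    ∑ K ∈ S.erase K₀, (#(K ∩ K₀)).choose d = (8).choose d * (octadCount d - 1) := by
  rw [sum_choose_card_inter, sum_const_nat (m := octadCount d - 1), card_powersetCard,
    hS.card_octad hK₀]
  intro D hD
  rw [mem_powersetCard] at hD
  rw [filter_erase, card_erase_of_mem (mem_filter.2 ⟨hK₀, hD.1⟩),
    hS.card_filter_superset (by omega), hD.2]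

theorem card_inter_ne_three (hS : IsSteinerSystem_5_8_24 S) {K K₀ : Finset Ω} (hK : K ∈ S)
    (hK₀ : K₀ ∈ S) (hne : K ≠ K₀) : #(K ∩ K₀) ≠ 3 := by
  have hsplit : ∑ L ∈ S.erase K₀, (#(L ∩ K₀)).choose 3 =
      4 * ∑ L ∈ S.erase K₀, (#(L ∩ K₀)).choose 4 + #{L ∈ S.erase K₀ | #(L ∩ K₀) = 3} := by
    rw [card_filter, mul_sum, ← sum_add_distrib]
    refine sum_congr rfl fun L hL => ?_
    rw [mem_erase] at hL
    exact Nat.choose_three_eq_of_le_four (hS.card_inter_le_four hL.2 hK₀ hL.1)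
  rw [hS.sum_choose_card_inter_octad hK₀ (by norm_num),
    hS.sum_choose_card_inter_octad hK₀ (by norm_num)] at hsplit
  have hempty : #{L ∈ S.erase K₀ | #(L ∩ K₀) = 3} = 0 := by
    simp only [octadCount, show (8).choose 3 = 56 from rfl, show (8).choose 4 = 70 from rfl]
      at hsplit
    omega
  rw [card_eq_zero, filter_eq_empty_iff] at hempty
  exact hempty (mem_erase.2 ⟨hne, hK⟩)

theorem card_inter_erase_le_three_and_ne_two (hS : IsSteinerSystem_5_8_24 S)
    {K K₀ : Finset Ω} (hK : K ∈ S) (hK₀ : K₀ ∈ S) (hne : K ≠ K₀) {p : Ω} (hp : p ∈ K ∩ K₀) :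
    #(K ∩ K₀.erase p) ≤ 3 ∧ #(K ∩ K₀.erase p) ≠ 2 := by
  have hcard : #(K ∩ K₀.erase p) + 1 = #(K ∩ K₀) := by
    rw [inter_erase]
    exact card_erase_add_one hp
  have := hS.card_inter_le_four hK hK₀ hne
  have := hS.card_inter_ne_three hK hK₀ hne
  omega

theorem sum_choose_card_inter_through_pair_avoiding (hS : IsSteinerSystem_5_8_24 S)
    {p q r : Ω} (hpq : p ≠ q) (hrp : r ≠ p) (hrq : r ≠ q) {B : Finset Ω} (hp : p ∉ B)
    (hq : q ∉ B) (hr : r ∉ B) {d : ℕ} (hd : d ≤ 2) :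
    ∑ K ∈ S.filter (fun K => p ∈ K ∧ q ∈ K ∧ r ∉ K), (#(K ∩ B)).choose d =
      (#B).choose d * (octadCount (d + 2) - octadCount (d + 3)) := by
  rw [sum_choose_card_inter, sum_const_nat (m := octadCount (d + 2) - octadCount (d + 3)),
    card_powersetCard]
  intro D hD
  rw [mem_powersetCard] at hD
  have hpD : p ∉ D := fun h => hp (hD.1 h)
  have hqD : q ∉ D := fun h => hq (hD.1 h)
  have hcard : #(insert p (insert q D)) = d + 2 := by
    rw [card_insert_of_notMem (by simp [hpq, hpD]), card_insert_of_notMem hqD, hD.2]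
  have hrD : r ∉ insert p (insert q D) := by
    have hrD : r ∉ D := fun h => hr (hD.1 h)
    simp [hrp, hrq, hrD]
  have hcount := hS.card_filter_superset_not_mem (by omega) hrD
  rw [hcard] at hcount
  rw [← hcount, filter_filter]
  congr 1
  refine filter_congr fun K _ => ?_
  simp only [insert_subset_iff]
  tauto

end IsSteinerSystem_5_8_24

theorem count_octads_E7_x {Ω : Type*} [Fintype Ω] [DecidableEq Ω]
    (S : Finset (Finset Ω)) (hS : IsSteinerSystem_5_8_24 S)
    (pinf p0 p1 : Ω) (h01 : p0 ≠ p1) (hinf0 : pinf ≠ p0) (hinf1 : pinf ≠ p1)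
    (K₀ : Finset Ω) (hK₀S : K₀ ∈ S)
    (h0K : p0 ∈ K₀) (hinfK : pinf ∉ K₀) (h1K : p1 ∉ K₀) :
    (S.filter fun K => p0 ∈ K ∧ p1 ∈ K ∧ pinf ∉ K ∧ (K ∩ K₀).card = 2).card = 28 := by
  set F := S.filter fun K => p0 ∈ K ∧ p1 ∈ K ∧ pinf ∉ K
  set B := K₀.erase p0
  have hB : #B = 7 := by rw [card_erase_of_mem h0K, hS.card_octad hK₀S]
  have hmoment {d : ℕ} (hd : d ≤ 2) : ∑ K ∈ F, (#(K ∩ B)).choose d =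
      (7).choose d * (octadCount (d + 2) - octadCount (d + 3)) := by
    rw [← hB]
    exact hS.sum_choose_card_inter_through_pair_avoiding h01 hinf0 hinf1 (notMem_erase p0 K₀)
      (fun h => h1K (mem_of_mem_erase h)) (fun h => hinfK (mem_of_mem_erase h)) hd
  have hsum₁ : ∑ K ∈ F, #(K ∩ B) = 112 := by simpa [octadCount] using hmoment (d := 1)
  have hsum₂ : ∑ K ∈ F, (#(K ∩ B)).choose 2 = 84 := by
    simpa [octadCount, Nat.choose] using hmoment (d := 2)
  have hsplit :
      ∑ K ∈ F, #(K ∩ B) = #{K ∈ F | #(K ∩ B) = 1} + ∑ K ∈ F, (#(K ∩ B)).choose 2 := by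
    rw [card_filter, ← sum_add_distrib]
    refine sum_congr rfl fun K hK => ?_
    rw [mem_filter] at hK
    have hne : K ≠ K₀ := by rintro rfl; exact h1K hK.2.2.1
    obtain ⟨hle, hne₂⟩ :=
      hS.card_inter_erase_le_three_and_ne_two hK.1 hK₀S hne (mem_inter.2 ⟨hK.2.1, h0K⟩)
    exact Nat.eq_ite_add_choose_two hle hne₂
  have htarget : (S.filter fun K => p0 ∈ K ∧ p1 ∈ K ∧ pinf ∉ K ∧ (K ∩ K₀).card = 2) =
      {K ∈ F | #(K ∩ B) = 1} := by
    rw [filter_filter]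
    refine filter_congr fun K _ => ?_
    simp only [and_assoc]
    refine and_congr_right fun hK => and_congr_right fun _ => and_congr_right fun _ => ?_
    rw [← card_erase_add_one (mem_inter.2 ⟨hK, h0K⟩), ← inter_erase]
    show #(K ∩ B) + 1 = 2 ↔ _
    omega
  rw [htarget]
  omega
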